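/- Let $d = 1$ and $T > 0$. There is a constant $c > 0$ (depending on $T$) such that for all distinct $x, y$ in a bounded open set $D \subset \mathbb{R}$ with $\mathrm{diam}(D)^2 \le T$: $$\int_0^T \Big(1 \wedge \frac{\delta_D(x)}{\sqrt t}\Big)\Big(1 \wedge \frac{\delta_D(y)}{\sqrt t}\Big)\Big(t^{-1/2} \wedge \frac{t}{|x-y|^{3}}\Big) dt \le c\, \Big[\big(\delta_D(x)\delta_D(y)\big)^{1/2} \wedge \frac{\delta_D(x)\delta_D(y)}{|x-y|}\Big].$$ -/

import Mathlib

open Set MeasureTheory Metric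

/-!
Write `a, b` for the distances of `x, y` to `Dᶜ` and `r = |x - y|`. Each factor `1 ∧ a/√t` is at
most `1`, and their product is at most `ab/t`, so the integrand is bounded by `t^(-1/2)`, by
`ab/r³` and by `ab t^(-3/2)`. Splitting the time integral at `t = r²` gives the bound `3ab/r`,
splitting it at `t = ab` gives `4√(ab)`; hence `c = 4` works for every `T`.
-/

lemma setIntegral_Ioc_le_of_le_on_Ioc_Ioi {f g h : ℝ → ℝ} {s : ℝ} (T : ℝ) (hs : 0 ≤ s)
    (hf : AEStronglyMeasurable f (volume.restrict (Ioi 0))) (hf0 : ∀ t ∈ Ioi 0, 0 ≤ f t)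
    (hg : IntegrableOn g (Ioc 0 s)) (hh : IntegrableOn h (Ioi s))
    (hfg : ∀ t ∈ Ioc 0 s, f t ≤ g t) (hfh : ∀ t ∈ Ioi s, f t ≤ h t) :
    ∫ t in Ioc 0 T, f t ≤ (∫ t in Ioc 0 s, g t) + ∫ t in Ioi s, h t := by
  have dominated : ∀ {S : Set ℝ} {k : ℝ → ℝ}, S ⊆ Ioi 0 → MeasurableSet S →
      IntegrableOn k S → (∀ t ∈ S, f t ≤ k t) → IntegrableOn f S :=
    fun hS hSm hk hfk ↦ hk.mono' (hf.mono_set hS) <|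
      (ae_restrict_iff' hSm).2 <| .of_forall fun t ht ↦ by
        rw [Real.norm_eq_abs, abs_of_nonneg (hf0 t (hS ht))]; exact hfk t ht
  have hf_Ioc := dominated Ioc_subset_Ioi_self measurableSet_Ioc hg hfg
  have hf_Ioi := dominated (Ioi_subset_Ioi hs) measurableSet_Ioi hh hfh
  calc ∫ t in Ioc 0 T, f t
      ≤ ∫ t in Ioi 0, f t := by
        refine setIntegral_mono_set ?_ ?_ (.of_forall Ioc_subset_Ioi_self)
        · rw [← Ioc_union_Ioi_eq_Ioi hs]; exact hf_Ioc.union hf_Ioi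
        · exact (ae_restrict_iff' measurableSet_Ioi).2 (.of_forall hf0)
    _ = (∫ t in Ioc 0 s, f t) + ∫ t in Ioi s, f t := by
        rw [← Ioc_union_Ioi_eq_Ioi hs,
          setIntegral_union (Ioc_disjoint_Ioi le_rfl) measurableSet_Ioi hf_Ioc hf_Ioi]
    _ ≤ (∫ t in Ioc 0 s, g t) + ∫ t in Ioi s, h t :=
        add_le_add (setIntegral_mono_on hf_Ioc hg measurableSet_Ioc hfg)
          (setIntegral_mono_on hf_Ioi hh measurableSet_Ioi hfh)

lemma integral_Ioc_rpow_neg_one_half {s : ℝ} (hs : 0 ≤ s) :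
    ∫ t in Ioc 0 s, t ^ (-(1:ℝ) / 2) = 2 * √s := by
  rw [← intervalIntegral.integral_of_le hs, integral_rpow (Or.inl (by norm_num)),
    show -(1:ℝ) / 2 + 1 = 1 / 2 by norm_num, Real.zero_rpow (by norm_num), ← Real.sqrt_eq_rpow]
  ring

lemma integrableOn_Ioc_rpow_neg_one_half (s : ℝ) :
    IntegrableOn (fun t : ℝ ↦ t ^ (-(1:ℝ) / 2)) (Ioc 0 s) :=
  (intervalIntegral.intervalIntegrable_rpow' (by norm_num)).1

lemma integral_Ioi_rpow_neg_three_halves {s : ℝ} (hs : 0 < s) :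
    ∫ t in Ioi s, t ^ (-(3:ℝ) / 2) = 2 / √s := by
  rw [integral_Ioi_rpow_of_lt (by norm_num) hs, show -(3:ℝ) / 2 + 1 = -(1 / 2) by norm_num,
    Real.rpow_neg hs.le, ← Real.sqrt_eq_rpow]
  ring

noncomputable def greenIntegrand (a b r t : ℝ) : ℝ :=
  min 1 (a / √t) * min 1 (b / √t) * min (t ^ (-(1:ℝ) / 2)) (t / r ^ 3)

section greenIntegrand

variable {a b r t : ℝ}

lemma min_one_div_sqrt_mul_le (ha : 0 ≤ a) (hb : 0 ≤ b) (ht : 0 < t) :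
    min 1 (a / √t) * min 1 (b / √t) ≤ a * b / t := by
  calc min 1 (a / √t) * min 1 (b / √t) ≤ a / √t * (b / √t) :=
        mul_le_mul (min_le_right _ _) (min_le_right _ _) (by positivity) (by positivity)
    _ = a * b / t := by rw [div_mul_div_comm, Real.mul_self_sqrt ht.le]

lemma greenIntegrand_nonneg (ha : 0 ≤ a) (hb : 0 ≤ b) (hr : 0 ≤ r) (ht : 0 ≤ t) :
    0 ≤ greenIntegrand a b r t := by
  unfold greenIntegrand
  positivity

lemma greenIntegrand_le_rpow_neg_one_half (hb : 0 ≤ b) (hr : 0 ≤ r) (ht : 0 ≤ t) :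
    greenIntegrand a b r t ≤ t ^ (-(1:ℝ) / 2) := by
  unfold greenIntegrand
  calc _ ≤ 1 * t ^ (-(1:ℝ) / 2) :=
        mul_le_mul (mul_le_one₀ (min_le_left _ _) (by positivity) (min_le_left _ _))
          (min_le_left _ _) (by positivity) zero_le_one
    _ = t ^ (-(1:ℝ) / 2) := one_mul _

lemma greenIntegrand_le_const (ha : 0 ≤ a) (hb : 0 ≤ b) (hr : 0 < r) (ht : 0 < t) :
    greenIntegrand a b r t ≤ a * b / r ^ 3 := by
  unfold greenIntegrand
  calc _ ≤ a * b / t * (t / r ^ 3) :=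
        mul_le_mul (min_one_div_sqrt_mul_le ha hb ht) (min_le_right _ _) (by positivity)
          (by positivity)
    _ = a * b / r ^ 3 := by field_simp

lemma greenIntegrand_le_mul_rpow_neg_three_halves (ha : 0 ≤ a) (hb : 0 ≤ b) (hr : 0 ≤ r)
    (ht : 0 < t) : greenIntegrand a b r t ≤ a * b * t ^ (-(3:ℝ) / 2) := by
  unfold greenIntegrand
  calc _ ≤ a * b / t * t ^ (-(1:ℝ) / 2) :=
        mul_le_mul (min_one_div_sqrt_mul_le ha hb ht) (min_le_left _ _) (by positivity)
          (by positivity)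
    _ = a * b * t ^ (-(3:ℝ) / 2) := by
        rw [show -(3:ℝ) / 2 = -1 + -(1:ℝ) / 2 by norm_num, Real.rpow_add ht, Real.rpow_neg_one]
        ring

lemma aestronglyMeasurable_greenIntegrand (a b r : ℝ) (μ : Measure ℝ) :
    AEStronglyMeasurable (greenIntegrand a b r) μ := by
  unfold greenIntegrand; fun_prop

lemma integral_greenIntegrand_le_div (T : ℝ) (ha : 0 ≤ a) (hb : 0 ≤ b) (hr : 0 < r) :
    ∫ t in Ioc 0 T, greenIntegrand a b r t ≤ 3 * (a * b / r) := by
  have hr2 : 0 < r ^ 2 := by positivity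
  calc ∫ t in Ioc 0 T, greenIntegrand a b r t
      ≤ (∫ _ in Ioc 0 (r ^ 2), a * b / r ^ 3) + ∫ t in Ioi (r ^ 2), a * b * t ^ (-(3:ℝ) / 2) :=
        setIntegral_Ioc_le_of_le_on_Ioc_Ioi T hr2.le (aestronglyMeasurable_greenIntegrand ..)
          (fun t ht ↦ greenIntegrand_nonneg ha hb hr.le ht.le)
          (integrableOn_const measure_Ioc_lt_top.ne)
          ((integrableOn_Ioi_rpow_of_lt (by norm_num) hr2).const_mul _)
          (fun t ht ↦ greenIntegrand_le_const ha hb hr ht.1)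
          (fun t ht ↦ greenIntegrand_le_mul_rpow_neg_three_halves ha hb hr.le (hr2.trans ht))
    _ = 3 * (a * b / r) := by
        rw [setIntegral_const, integral_const_mul, integral_Ioi_rpow_neg_three_halves hr2,
          Real.sqrt_sq hr.le, measureReal_def, Real.volume_Ioc, sub_zero,
          ENNReal.toReal_ofReal hr2.le, smul_eq_mul]
        field_simp
        ring

lemma integral_greenIntegrand_le_sqrt (T : ℝ) (ha : 0 ≤ a) (hb : 0 ≤ b) (hr : 0 ≤ r)
    (hab : 0 < a * b) :
    ∫ t in Ioc 0 T, greenIntegrand a b r t ≤ 4 * √(a * b) := by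
  calc ∫ t in Ioc 0 T, greenIntegrand a b r t
      ≤ (∫ t in Ioc 0 (a * b), t ^ (-(1:ℝ) / 2)) +
          ∫ t in Ioi (a * b), a * b * t ^ (-(3:ℝ) / 2) :=
        setIntegral_Ioc_le_of_le_on_Ioc_Ioi T hab.le (aestronglyMeasurable_greenIntegrand ..)
          (fun t ht ↦ greenIntegrand_nonneg ha hb hr ht.le) (integrableOn_Ioc_rpow_neg_one_half _)
          ((integrableOn_Ioi_rpow_of_lt (by norm_num) hab).const_mul _)
          (fun t ht ↦ greenIntegrand_le_rpow_neg_one_half hb hr ht.1.le)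
          (fun t ht ↦ greenIntegrand_le_mul_rpow_neg_three_halves ha hb hr (hab.trans ht))
    _ = 4 * √(a * b) := by
        rw [integral_Ioc_rpow_neg_one_half hab.le, integral_const_mul,
          integral_Ioi_rpow_neg_three_halves hab]
        have := Real.sqrt_pos.2 hab
        field_simp
        rw [Real.sq_sqrt hab.le]
        ring

lemma integral_greenIntegrand_le_min (T : ℝ) (ha : 0 ≤ a) (hb : 0 ≤ b) (hr : 0 < r) :
    ∫ t in Ioc 0 T, greenIntegrand a b r t ≤ 4 * min √(a * b) (a * b / r) := by
  have hdiv := integral_greenIntegrand_le_div T ha hb hr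
  rcases (mul_nonneg ha hb).eq_or_lt with hab | hab
  · simpa [← hab] using hdiv
  · rw [mul_min_of_nonneg _ _ (by norm_num : (0:ℝ) ≤ 4)]
    refine le_min (integral_greenIntegrand_le_sqrt T ha hb hr.le hab) (hdiv.trans ?_)
    gcongr
    norm_num

end greenIntegrand

theorem stmt_8_general (T : ℝ) :
    ∃ c > (0:ℝ), ∀ (D : Set ℝ), IsOpen D →
      Bornology.IsBounded D → (EMetric.diam D).toReal ^ 2 ≤ T →
      ∀ x ∈ D, ∀ y ∈ D, x ≠ y →
        (∫ t in Ioc (0:ℝ) T,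
            min 1 (infDist x Dᶜ / Real.sqrt t) * min 1 (infDist y Dᶜ / Real.sqrt t) *
              min (t ^ (-(1:ℝ) / 2)) (t / |x - y| ^ 3)) ≤
          c * min (Real.sqrt (infDist x Dᶜ * infDist y Dᶜ))
            (infDist x Dᶜ * infDist y Dᶜ / |x - y|) :=
  ⟨4, by norm_num, fun D _ _ _ x _ y _ hxy ↦
    integral_greenIntegrand_le_min T infDist_nonneg infDist_nonneg
      (abs_pos.2 (sub_ne_zero.2 hxy))⟩

theorem stmt_8 (T : ℝ) (hT : 0 < T) :
    ∃ c > (0:ℝ), ∀ (D : Set ℝ), IsOpen D →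
      Bornology.IsBounded D → (EMetric.diam D).toReal ^ 2 ≤ T →
      ∀ x ∈ D, ∀ y ∈ D, x ≠ y →
        (∫ t in Ioc (0:ℝ) T,
            min 1 (infDist x Dᶜ / Real.sqrt t) * min 1 (infDist y Dᶜ / Real.sqrt t) *
              min (t ^ (-(1:ℝ) / 2)) (t / |x - y| ^ 3)) ≤
          c * min (Real.sqrt (infDist x Dᶜ * infDist y Dᶜ))
            (infDist x Dᶜ * infDist y Dᶜ / |x - y|) :=
  stmt_8_general T
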